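/- Suppose a group G admits an injective group homomorphism into the group of surjective linear isometries of ℓ²(ℕ;ℝ) whose induced action on the unit sphere of ℓ²(ℕ;ℝ) is free and properly discontinuous. Then for every infinite set D, G admits an injective group homomorphism into the group of surjective linear isometries of ℓ²(D;ℝ) whose induced action on the unit sphere of ℓ²(D;ℝ) is free and properly discontinuous. -/

import Mathlib

/-!
Call an action `a` of `G` on a metric space *orbit-discrete at `(x, y)`* if some ball around `y`
contains `a g x` for at most one `g`. For an isometric action, orbit-discreteness at all pairs
implies freeness and proper discontinuity, and conversely for a free, properly discontinuous
isometric group action. For a linear isometric representation, orbit-discreteness on the unit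
sphere extends by scaling to all pairs `(x, y)` with `x ≠ 0`, pairs of different norms being
trivially separated.

Choosing a bijection `D × ℕ ≃ D`, let `G` act block-diagonally on
`ℓ²(D) ≅ ℓ²(D × ℕ) = ⨁_{i ∈ D} ℓ²(ℕ)`. If `x ≠ 0`, some block `xᵢ` is nonzero, and
`‖g • x - y‖ ≥ ‖g • xᵢ - yᵢ‖` carries orbit-discreteness at `(xᵢ, yᵢ)` over to `(x, y)`.
-/

/-- An action (given as a family of maps `a g : X → X`) of a group `G` on a topological
space `X` is properly discontinuous if:
(1) points in different orbits can be separated by open sets `U`, `V` with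
    `a g '' U ∩ V = ∅` for all `g`;
(2) every stabilizer is finite;
(3) every point has an open neighborhood `U`, stable under its stabilizer, with
    `a g '' U ∩ U = ∅` for every `g` outside the stabilizer. -/
def IsProperlyDiscontinuousAction {G X : Type*} [TopologicalSpace X]
    (a : G → X → X) : Prop :=
  (∀ x y : X, (∀ g : G, a g x ≠ y) →
    ∃ U V : Set X, IsOpen U ∧ IsOpen V ∧ x ∈ U ∧ y ∈ V ∧
      ∀ g : G, (a g '' U) ∩ V = ∅) ∧
  (∀ x : X, {g : G | a g x = x}.Finite) ∧
  (∀ x : X, ∃ U : Set X, IsOpen U ∧ x ∈ U ∧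
    (∀ g : G, a g x = x → a g '' U ⊆ U) ∧
    ∀ g : G, a g x ≠ x → (a g '' U) ∩ U = ∅)

open Metric Set Function
open scoped lp ENNReal

section OrbitDiscrete

variable {G X Y : Type*}

/-- With `y = x` this forces freeness at `x`; for `y` off the orbit of `x` it separates `y` from
the orbit. -/
def OrbitDiscreteAt [PseudoMetricSpace X] (a : G → X → X) (x y : X) : Prop :=
  ∃ ε > 0, {g : G | dist (a g x) y < ε}.Subsingleton

theorem orbitDiscreteAt_iff_of_isometry [PseudoMetricSpace X] [PseudoMetricSpace Y]
    {a : G → X → X} {b : G → Y → Y} {f : X → Y} (hf : Isometry f) {x y : X}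
    (hab : ∀ g, b g (f x) = f (a g x)) :
    OrbitDiscreteAt b (f x) (f y) ↔ OrbitDiscreteAt a x y := by
  simp only [OrbitDiscreteAt, hab, hf.dist_eq]

theorem OrbitDiscreteAt.eq_one_of_apply_eq_self [PseudoMetricSpace X] [One G] {a : G → X → X}
    {x : X} (h : OrbitDiscreteAt a x x) (hone : a 1 x = x) {g : G} (hg : a g x = x) : g = 1 := by
  obtain ⟨ε, hε, hsub⟩ := h
  exact hsub (show dist (a g x) x < ε by rwa [hg, dist_self])
    (show dist (a 1 x) x < ε by rwa [hone, dist_self])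

theorem OrbitDiscreteAt.exists_pos_le_dist [MetricSpace X] {a : G → X → X} {x y : X}
    (h : OrbitDiscreteAt a x y) : ∃ δ > 0, ∀ g, a g x ≠ y → δ ≤ dist (a g x) y := by
  obtain ⟨ε, hε, hsub⟩ := h
  by_cases hnear : ∃ g₀, a g₀ x ≠ y ∧ dist (a g₀ x) y < ε
  · obtain ⟨g₀, hne, hlt⟩ := hnear
    refine ⟨min ε (dist (a g₀ x) y), lt_min hε (dist_pos.2 hne), fun g _ => ?_⟩
    by_cases hg : dist (a g x) y < ε
    · rw [hsub hg hlt]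
      exact min_le_right _ _
    · exact (min_le_left _ _).trans (not_lt.1 hg)
  · push Not at hnear
    exact ⟨ε, hε, hnear⟩

theorem Isometry.image_ball_inter_ball_eq_empty [PseudoMetricSpace X] {f : X → X}
    (hf : Isometry f) {x y : X} {δ : ℝ} (h : δ ≤ dist (f x) y) :
    f '' ball x (δ / 2) ∩ ball y (δ / 2) = ∅ := by
  refine eq_empty_iff_forall_notMem.2 ?_
  rintro _ ⟨⟨z, hz, rfl⟩, hzy⟩
  rw [mem_ball] at hz hzy
  have := dist_triangle (f x) (f z) y
  rw [hf.dist_eq] at this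
  rw [dist_comm] at hz
  linarith

theorem isProperlyDiscontinuousAction_of_orbitDiscreteAt [MetricSpace X] {a : G → X → X}
    (hiso : ∀ g, Isometry (a g)) (h : ∀ x y, OrbitDiscreteAt a x y) :
    IsProperlyDiscontinuousAction a := by
  refine ⟨fun x y hxy => ?_, fun x => ?_, fun x => ?_⟩
  · obtain ⟨δ, hδ, hle⟩ := (h x y).exists_pos_le_dist
    exact ⟨ball x (δ / 2), ball y (δ / 2), isOpen_ball, isOpen_ball, mem_ball_self (half_pos hδ),
      mem_ball_self (half_pos hδ), fun g => (hiso g).image_ball_inter_ball_eq_empty (hle g (hxy g))⟩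
  · obtain ⟨ε, hε, hsub⟩ := h x x
    exact hsub.finite.subset fun g (hg : a g x = x) => show dist (a g x) x < ε by
      rwa [hg, dist_self]
  · obtain ⟨δ, hδ, hle⟩ := (h x x).exists_pos_le_dist
    refine ⟨ball x (δ / 2), isOpen_ball, mem_ball_self (half_pos hδ), fun g hg => ?_,
      fun g hg => (hiso g).image_ball_inter_ball_eq_empty (hle g hg)⟩
    simpa only [hg] using ((hiso g).mapsTo_ball x (δ / 2)).image_subset

theorem orbitDiscreteAt_of_isProperlyDiscontinuousAction [Group G] [MetricSpace X]
    {a : G → X → X} (hiso : ∀ g, Isometry (a g)) (hmul : ∀ g h x, a (g * h) x = a g (a h x))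
    (hone : ∀ x, a 1 x = x) (hfree : ∀ g x, a g x = x → g = 1)
    (hpd : IsProperlyDiscontinuousAction a) (x y : X) : OrbitDiscreteAt a x y := by
  obtain ⟨hsep, -, hnbhd⟩ := hpd
  by_cases hy : ∃ h, a h x = y
  · obtain ⟨h, rfl⟩ := hy
    obtain ⟨U, hU, hxU, -, hdisj⟩ := hnbhd x
    obtain ⟨ε, hε, hball⟩ := isOpen_iff.1 hU x hxU
    refine ⟨ε, hε, subsingleton_of_forall_eq h fun g (hg : dist (a g x) (a h x) < ε) => ?_⟩
    have hback : a h⁻¹ (a h x) = x := by rw [← hmul, inv_mul_cancel, hone]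
    have hnear : dist (a (h⁻¹ * g) x) x < ε :=
      calc dist (a (h⁻¹ * g) x) x = dist (a h⁻¹ (a g x)) (a h⁻¹ (a h x)) := by rw [hmul, hback]
        _ = dist (a g x) (a h x) := (hiso _).dist_eq _ _
        _ < ε := hg
    have hfix : a (h⁻¹ * g) x = x := by
      by_contra hne
      exact (eq_empty_iff_forall_notMem.1 (hdisj _ hne)) _ ⟨mem_image_of_mem _ hxU, hball hnear⟩
    exact (inv_mul_eq_one.1 (hfree _ _ hfix)).symm
  · push Not at hy
    obtain ⟨U, V, -, hV, hxU, hyV, hdisj⟩ := hsep x y hy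
    obtain ⟨ε, hε, hball⟩ := isOpen_iff.1 hV y hyV
    refine ⟨ε, hε, fun g (hg : dist (a g x) y < ε) => ?_⟩
    exact ((eq_empty_iff_forall_notMem.1 (hdisj g)) _ ⟨mem_image_of_mem _ hxU, hball hg⟩).elim

end OrbitDiscrete

section AutCongr

variable {G R X Y : Type*} [Semiring R] [SeminormedAddCommGroup X] [Module R X]
  [SeminormedAddCommGroup Y] [Module R Y]

def LinearIsometryEquiv.autCongr (Φ : X ≃ₗᵢ[R] Y) : (X ≃ₗᵢ[R] X) ≃* (Y ≃ₗᵢ[R] Y) where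
  toFun T := Φ.symm.trans (T.trans Φ)
  invFun S := Φ.trans (S.trans Φ.symm)
  left_inv T := by ext; simp
  right_inv S := by ext; simp
  map_mul' T S := by ext; simp

theorem orbitDiscreteAt_autCongr_iff (Φ : X ≃ₗᵢ[R] Y) (T : G → X ≃ₗᵢ[R] X) (x y : Y) :
    OrbitDiscreteAt (fun g => Φ.autCongr (T g)) x y ↔
      OrbitDiscreteAt (fun g => T g) (Φ.symm x) (Φ.symm y) :=
  (orbitDiscreteAt_iff_of_isometry Φ.symm.isometry fun g => by
    simp [LinearIsometryEquiv.autCongr]).symm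

end AutCongr

section Sphere

variable {G E : Type*} [NormedAddCommGroup E]

theorem orbitDiscreteAt_of_norm_ne {𝕜 : Type*} [NormedField 𝕜] [NormedSpace 𝕜 E]
    (T : G → E ≃ₗᵢ[𝕜] E) {x y : E} (h : ‖x‖ ≠ ‖y‖) : OrbitDiscreteAt (fun g => T g) x y := by
  refine ⟨|‖x‖ - ‖y‖|, abs_pos.2 (sub_ne_zero.2 h), fun g (hg : dist (T g x) y < _) => ?_⟩
  refine (hg.not_ge ?_).elim
  calc |‖x‖ - ‖y‖| = |‖T g x‖ - ‖y‖| := by rw [(T g).norm_map]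
    _ ≤ dist (T g x) y := by rw [dist_eq_norm]; exact abs_norm_sub_norm_le _ _

theorem OrbitDiscreteAt.smul {𝕜 : Type*} [NormedField 𝕜] [NormedSpace 𝕜 E]
    {T : G → E ≃ₗᵢ[𝕜] E} {x y : E} (h : OrbitDiscreteAt (fun g => T g) x y) {c : 𝕜}
    (hc : c ≠ 0) : OrbitDiscreteAt (fun g => T g) (c • x) (c • y) := by
  obtain ⟨ε, hε, hsub⟩ := h
  have hc' : 0 < ‖c‖ := norm_pos_iff.2 hc
  refine ⟨‖c‖ * ε, mul_pos hc' hε, ?_⟩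
  simpa only [map_smul, dist_smul₀, mul_lt_mul_iff_right₀ hc'] using hsub

variable [NormedSpace ℝ E]

theorem orbitDiscreteAt_of_forall_sphere {T : G → E ≃ₗᵢ[ℝ] E}
    (h : ∀ x ∈ sphere (0 : E) 1, ∀ y ∈ sphere (0 : E) 1, OrbitDiscreteAt (fun g => T g) x y)
    {x : E} (hx : x ≠ 0) (y : E) : OrbitDiscreteAt (fun g => T g) x y := by
  by_cases hxy : ‖x‖ = ‖y‖
  · have hx' : ‖x‖ ≠ 0 := norm_ne_zero_iff.2 hx
    have hunit : ∀ z : E, ‖z‖ = ‖x‖ → ‖x‖⁻¹ • z ∈ sphere (0 : E) 1 := fun z hz => by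
      rw [mem_sphere_zero_iff_norm, norm_smul, norm_inv, norm_norm, hz, inv_mul_cancel₀ hx']
    have := (h _ (hunit x rfl) _ (hunit y hxy.symm)).smul hx'
    rwa [smul_inv_smul₀ hx', smul_inv_smul₀ hx'] at this
  · exact orbitDiscreteAt_of_norm_ne T hxy

variable [Group G] {ρ : G →* (E ≃ₗᵢ[ℝ] E)} {a : G → sphere (0 : E) 1 → sphere (0 : E) 1}

theorem free_and_isProperlyDiscontinuousAction_sphere_iff (ha : ∀ g p, (a g p : E) = ρ g p) :
    ((∀ g p, a g p = p → g = 1) ∧ IsProperlyDiscontinuousAction a) ↔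
      ∀ x : E, x ≠ 0 → ∀ y, OrbitDiscreteAt (fun g => ρ g) x y := by
  have hiso : ∀ g, Isometry (a g) := fun g => Isometry.of_dist_eq fun p q => by
    rw [Subtype.dist_eq, Subtype.dist_eq, ha, ha, (ρ g).dist_map]
  have hone : ∀ p, a 1 p = p := fun p => Subtype.ext (by rw [ha, map_one]; rfl)
  have hcoe : ∀ p q : sphere (0 : E) 1,
      OrbitDiscreteAt (fun g => ρ g) (p : E) q ↔ OrbitDiscreteAt a p q :=
    fun p q => orbitDiscreteAt_iff_of_isometry isometry_subtype_coe fun g => (ha g p).symm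
  constructor
  · rintro ⟨hfree, hpd⟩
    have hmul : ∀ g h p, a (g * h) p = a g (a h p) := fun g h p =>
      Subtype.ext (by rw [ha, ha, ha, map_mul]; rfl)
    refine fun x hx y => orbitDiscreteAt_of_forall_sphere (fun x hx y hy => ?_) hx y
    exact (hcoe ⟨x, hx⟩ ⟨y, hy⟩).2
      (orbitDiscreteAt_of_isProperlyDiscontinuousAction hiso hmul hone hfree hpd _ _)
  · intro h
    have hsphere : ∀ p q, OrbitDiscreteAt a p q := fun p q =>
      (hcoe p q).1 (h p (ne_zero_of_mem_unit_sphere p) q)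
    exact ⟨fun g p => (hsphere p p).eq_one_of_apply_eq_self (hone p),
      isProperlyDiscontinuousAction_of_orbitDiscreteAt hiso hsphere⟩

theorem injective_of_free_on_sphere (ha : ∀ g p, (a g p : E) = ρ g p)
    (hfree : ∀ g p, a g p = p → g = 1) (p : sphere (0 : E) 1) : Injective ρ :=
  (injective_iff_map_eq_one ρ).2 fun g hg => hfree g p (Subtype.ext (by rw [ha, hg]; rfl))

end Sphere

noncomputable section BlockDiagonal

variable {𝕜 E ι κ : Type*} [NormedField 𝕜] [NormedAddCommGroup E] [NormedSpace 𝕜 E]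

theorem Memℓp.comp_injective {f : κ → E} (hf : Memℓp f 2) {e : ι → κ} (he : Injective e) :
    Memℓp (f ∘ e) 2 :=
  memℓp_gen ((hf.summable (by norm_num)).comp_injective he)

variable (𝕜) in
def LinearIsometryEquiv.lpCongrLeft (e : ι ≃ κ) : ℓ²(ι, E) ≃ₗᵢ[𝕜] ℓ²(κ, E) where
  toFun f := ⟨f ∘ e.symm, (lp.memℓp f).comp_injective e.symm.injective⟩
  invFun f := ⟨f ∘ e, (lp.memℓp f).comp_injective e.injective⟩
  map_add' _ _ := rfl
  map_smul' _ _ := rfl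
  left_inv f := lp.ext (funext fun i => by simp)
  right_inv f := lp.ext (funext fun k => by simp)
  norm_map' f := Real.rpow_left_injOn (by norm_num) (norm_nonneg _) (norm_nonneg _)
    ((lp.hasSum_norm (by norm_num) _).unique
      ((e.symm.hasSum_iff (f := fun i => ‖f i‖ ^ _)).2 (lp.hasSum_norm (by norm_num) f)))

namespace lp

def slice (i : ι) : ℓ²(ι × κ, E) →+ ℓ²(κ, E) where
  toFun f := ⟨fun k => f (i, k), (lp.memℓp f).comp_injective (Prod.mk_right_injective i)⟩
  map_zero' := rfl
  map_add' _ _ := rfl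

theorem slice_smul (i : ι) (c : 𝕜) (f : ℓ²(ι × κ, E)) : slice i (c • f) = c • slice i f := rfl

@[simp]
theorem slice_apply (i : ι) (f : ℓ²(ι × κ, E)) (k : κ) : slice i f k = f (i, k) := rfl

theorem hasSum_norm_slice (f : ℓ²(ι × κ, E)) :
    HasSum (fun i => ‖slice i f‖ ^ (2 : ℝ≥0∞).toReal) (‖f‖ ^ (2 : ℝ≥0∞).toReal) :=
  (lp.hasSum_norm (by norm_num) f).prod_fiberwise fun i => lp.hasSum_norm (by norm_num) (slice i f)

theorem norm_slice_le (i : ι) (f : ℓ²(ι × κ, E)) : ‖slice i f‖ ≤ ‖f‖ :=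
  (Real.rpow_le_rpow_iff (norm_nonneg _) (norm_nonneg _) (by norm_num)).1 <|
    le_hasSum (hasSum_norm_slice f) i fun _ _ => by positivity

theorem norm_eq_of_norm_slice_eq {f g : ℓ²(ι × κ, E)} (h : ∀ i, ‖slice i f‖ = ‖slice i g‖) :
    ‖f‖ = ‖g‖ :=
  Real.rpow_left_injOn (by norm_num) (norm_nonneg _) (norm_nonneg _)
    ((hasSum_norm_slice f).unique (by simpa only [h] using hasSum_norm_slice g))

theorem exists_slice_ne_zero {f : ℓ²(ι × κ, E)} (hf : f ≠ 0) : ∃ i, slice i f ≠ 0 := by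
  contrapose! hf
  exact lp.ext (funext fun ik => by simpa using congrArg (· ik.2) (hf ik.1))

theorem memℓp_blockDiagonal (T : ℓ²(κ, E) →ₗᵢ[𝕜] ℓ²(κ, E)) (f : ℓ²(ι × κ, E)) :
    Memℓp (fun ik : ι × κ => T (slice ik.1 f) ik.2) 2 := by
  refine memℓp_gen ((summable_prod_of_nonneg fun _ => by positivity).2
    ⟨fun i => (lp.memℓp (T (slice i f))).summable (by norm_num), ?_⟩)
  simp only [← lp.norm_rpow_eq_tsum (by norm_num : 0 < (2 : ℝ≥0∞).toReal), T.norm_map]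
  exact (hasSum_norm_slice f).summable

def blockDiagonalIsometry (T : ℓ²(κ, E) →ₗᵢ[𝕜] ℓ²(κ, E)) :
    ℓ²(ι × κ, E) →ₗᵢ[𝕜] ℓ²(ι × κ, E) where
  toFun f := ⟨_, memℓp_blockDiagonal T f⟩
  map_add' f g := lp.ext (funext fun ik => by
    change T (slice ik.1 (f + g)) ik.2 = T (slice ik.1 f) ik.2 + T (slice ik.1 g) ik.2
    rw [map_add, map_add]
    rfl)
  map_smul' c f := lp.ext (funext fun ik => by
    change T (slice ik.1 (c • f)) ik.2 = c • T (slice ik.1 f) ik.2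
    rw [slice_smul, map_smul]
    rfl)
  norm_map' f := norm_eq_of_norm_slice_eq fun i => T.norm_map (slice i f)

def blockDiagonal (T : ℓ²(κ, E) ≃ₗᵢ[𝕜] ℓ²(κ, E)) : ℓ²(ι × κ, E) ≃ₗᵢ[𝕜] ℓ²(ι × κ, E) :=
  { blockDiagonalIsometry T.toLinearIsometry with
    invFun := blockDiagonalIsometry T.symm.toLinearIsometry
    left_inv := fun f => lp.ext (funext fun ik => by
      change T.symm (T (slice ik.1 f)) ik.2 = f ik
      simp)
    right_inv := fun f => lp.ext (funext fun ik => by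
      change T (T.symm (slice ik.1 f)) ik.2 = f ik
      simp) }

@[simp]
theorem slice_blockDiagonal (T : ℓ²(κ, E) ≃ₗᵢ[𝕜] ℓ²(κ, E)) (i : ι) (f : ℓ²(ι × κ, E)) :
    slice i (blockDiagonal T f) = T (slice i f) := rfl

def blockDiagonalHom : (ℓ²(κ, E) ≃ₗᵢ[𝕜] ℓ²(κ, E)) →* (ℓ²(ι × κ, E) ≃ₗᵢ[𝕜] ℓ²(ι × κ, E)) where
  toFun := blockDiagonal
  map_one' := rfl
  map_mul' _ _ := rfl

end lp

end BlockDiagonal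

theorem OrbitDiscreteAt.blockDiagonal {G 𝕜 E ι κ : Type*} [NormedField 𝕜] [NormedAddCommGroup E]
    [NormedSpace 𝕜 E] {T : G → ℓ²(κ, E) ≃ₗᵢ[𝕜] ℓ²(κ, E)} {x y : ℓ²(ι × κ, E)} {i : ι}
    (h : OrbitDiscreteAt (fun g => T g) (lp.slice i x) (lp.slice i y)) :
    OrbitDiscreteAt (fun g => lp.blockDiagonal (T g)) x y := by
  obtain ⟨ε, hε, hsub⟩ := h
  refine ⟨ε, hε, hsub.anti fun g (hg : dist _ _ < ε) => lt_of_le_of_lt ?_ hg⟩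
  change dist (T g (lp.slice i x)) (lp.slice i y) ≤ dist (lp.blockDiagonal (T g) x) y
  rw [dist_eq_norm, dist_eq_norm, ← lp.slice_blockDiagonal, ← map_sub]
  exact lp.norm_slice_le _ _

theorem orbitDiscreteAt_blockDiagonal {G 𝕜 E ι κ : Type*} [NormedField 𝕜] [NormedAddCommGroup E]
    [NormedSpace 𝕜 E] {T : G → ℓ²(κ, E) ≃ₗᵢ[𝕜] ℓ²(κ, E)}
    (h : ∀ x : ℓ²(κ, E), x ≠ 0 → ∀ y, OrbitDiscreteAt (fun g => T g) x y)
    {x : ℓ²(ι × κ, E)} (hx : x ≠ 0) (y : ℓ²(ι × κ, E)) :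
    OrbitDiscreteAt (fun g => lp.blockDiagonal (T g)) x y :=
  let ⟨_, hi⟩ := lp.exists_slice_ne_zero hx
  (h _ hi _).blockDiagonal

/-- If a group `G` embeds into the group of surjective linear isometries of
`ℓ²(ℕ; ℝ)` in such a way that the induced action on the unit sphere is free and properly
discontinuous, then for every infinite set `D` the group `G` embeds into the group of
surjective linear isometries of `ℓ²(D; ℝ)` with the induced action on the unit sphere
free and properly discontinuous. -/
theorem statement7 (G : Type*) [Group G]
    (hyp : ∃ ρ : G →* (lp (fun _ : ℕ => ℝ) 2 ≃ₗᵢ[ℝ] lp (fun _ : ℕ => ℝ) 2),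
      Function.Injective ρ ∧
      ∃ a : G → Metric.sphere (0 : lp (fun _ : ℕ => ℝ) 2) 1 →
            Metric.sphere (0 : lp (fun _ : ℕ => ℝ) 2) 1,
        (∀ (g : G) (p : Metric.sphere (0 : lp (fun _ : ℕ => ℝ) 2) 1),
            (a g p : lp (fun _ : ℕ => ℝ) 2) = ρ g (p : lp (fun _ : ℕ => ℝ) 2)) ∧
        (∀ (g : G) (p), a g p = p → g = 1) ∧
        IsProperlyDiscontinuousAction a)
    (D : Type*) [Infinite D] :
    ∃ ρ : G →* (lp (fun _ : D => ℝ) 2 ≃ₗᵢ[ℝ] lp (fun _ : D => ℝ) 2),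
      Function.Injective ρ ∧
      ∃ a : G → Metric.sphere (0 : lp (fun _ : D => ℝ) 2) 1 →
            Metric.sphere (0 : lp (fun _ : D => ℝ) 2) 1,
        (∀ (g : G) (p : Metric.sphere (0 : lp (fun _ : D => ℝ) 2) 1),
            (a g p : lp (fun _ : D => ℝ) 2) = ρ g (p : lp (fun _ : D => ℝ) 2)) ∧
        (∀ (g : G) (p), a g p = p → g = 1) ∧
        IsProperlyDiscontinuousAction a := by
  obtain ⟨ρ, -, a, ha, hfree, hpd⟩ := hyp
  have hρ := (free_and_isProperlyDiscontinuousAction_sphere_iff ha).1 ⟨hfree, hpd⟩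
  obtain ⟨e⟩ : Nonempty (D × ℕ ≃ D) := Cardinal.eq.1 (by simp [Cardinal.mk_prod])
  let Φ := LinearIsometryEquiv.lpCongrLeft (E := ℝ) ℝ e
  let ρD := Φ.autCongr.toMonoidHom.comp (lp.blockDiagonalHom.comp ρ)
  let aD : G → sphere (0 : ℓ²(D, ℝ)) 1 → sphere (0 : ℓ²(D, ℝ)) 1 :=
    fun g p => ⟨ρD g p, by simp⟩
  have haD : ∀ g p, (aD g p : ℓ²(D, ℝ)) = ρD g p := fun _ _ => rfl
  obtain ⟨hfreeD, hpdD⟩ := (free_and_isProperlyDiscontinuousAction_sphere_iff haD).2 fun x hx y =>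
    (orbitDiscreteAt_autCongr_iff Φ _ x y).2
      (orbitDiscreteAt_blockDiagonal hρ (by simpa using hx) _)
  classical
  obtain ⟨d⟩ := ‹Infinite D›.nonempty
  exact ⟨ρD, injective_of_free_on_sphere haD hfreeD ⟨lp.single 2 d 1, by simp⟩,
    aD, haD, hfreeD, hpdD⟩
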